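/- arXiv:1707.02663 — 3 statements merged into one kernel-verified Lean document; each statement's English description precedes it below -/
import Mathlib

section
/- Let t, d, e be nonzero elements of a field (or positive reals). Define infinite matrices D*, A*, E* by: D*_{ij} = 1/d if j = i+1 and 0 otherwise; A*_{ij} = 1 if j = 1 and 0 otherwise; E*_{i1} = d^{i-1}/(e t^{i-1}) and for 2 ≤ j ≤ i, E*_{ij} = d^{i-j}/t^{i-j+1}, with E*_{ij} = 0 for j > i. Then t·D*E* = D* + E*, d·D*A* = A*, and e·A*E* = A*. -/
/-!
`D*` shifts rows up by one (scaled by `1/d`) and `A*` copies row `0` into every row, so each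
relation reduces to an identity between rows of `E*`: the row recurrence
`t • E*_{i+1} = d • E*_i + δ_{i+1}` and the shape `E*_0 = e⁻¹ • δ_0` of the top row.
-/

noncomputable def matMulF {F : Type*} [Field F] (M N : ℕ → ℕ → F) : ℕ → ℕ → F :=
  fun i j => ∑ᶠ k, M i k * N k j

def DstarM {F : Type*} [Field F] (d : F) : ℕ → ℕ → F :=
  fun i j => if j = i + 1 then 1 / d else 0

def AstarM {F : Type*} [Field F] : ℕ → ℕ → F :=
  fun _ j => if j = 0 then 1 else 0

/-- Rows and columns are indexed from `0`, so `EstarM t d e i j` is the paper's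
`E*_{i+1, j+1}`. -/
def EstarM {F : Type*} [Field F] (t d e : F) : ℕ → ℕ → F :=
  fun i j =>
    if j = 0 then d ^ i / (e * t ^ i)
    else if j ≤ i then d ^ (i - j) / t ^ (i - j + 1)
    else 0

section

variable {F : Type*} [Field F]

lemma matMulF_eq_of_row_eq_zero {M : ℕ → ℕ → F} {i k₀ : ℕ} (h : ∀ k ≠ k₀, M i k = 0)
    (N : ℕ → ℕ → F) (j : ℕ) : matMulF M N i j = M i k₀ * N k₀ j :=
  finsum_eq_single _ k₀ fun k hk => by rw [h k hk, zero_mul]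

lemma matMulF_DstarM (d : F) (N : ℕ → ℕ → F) (i j : ℕ) :
    matMulF (DstarM d) N i j = N (i + 1) j / d := by
  rw [matMulF_eq_of_row_eq_zero (k₀ := i + 1) (fun k hk => if_neg hk)]
  simp [DstarM, div_eq_inv_mul]

lemma matMulF_AstarM (N : ℕ → ℕ → F) (i j : ℕ) : matMulF AstarM N i j = N 0 j := by
  rw [matMulF_eq_of_row_eq_zero (k₀ := 0) (fun k hk => if_neg hk)]
  simp [AstarM]

lemma EstarM_zero_left (t d e : F) (j : ℕ) : EstarM t d e 0 j = if j = 0 then e⁻¹ else 0 := by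
  by_cases hj : j = 0 <;> simp [EstarM, hj]

lemma mul_EstarM_succ {t : F} (ht : t ≠ 0) (d e : F) (i j : ℕ) :
    t * EstarM t d e (i + 1) j = d * EstarM t d e i j + if j = i + 1 then 1 else 0 := by
  unfold EstarM
  rcases Nat.eq_zero_or_pos j with rfl | hj
  · simp only [if_true, if_neg (Nat.succ_ne_zero i).symm, add_zero]
    field_simp
    ring
  rcases lt_trichotomy j (i + 1) with hlt | rfl | hgt
  · have hsub : i + 1 - j = i - j + 1 := by omega
    simp only [if_neg hj.ne', if_pos hlt.le, if_pos (Nat.le_of_lt_succ hlt), if_neg hlt.ne,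
      hsub, add_zero, pow_succ]
    field_simp
  · simp [ht]
  · simp only [if_neg hj.ne', if_neg hgt.not_ge, if_neg (by omega : ¬j ≤ i), if_neg hgt.ne',
      mul_zero, add_zero]

end

/-- The explicit matrices `D*`, `A*`, `E*` satisfy the inhomogeneous Matrix Ansatz
relations `t·D*E* = D* + E*`, `d·D*A* = A*`, `e·A*E* = A*`. -/
theorem inhomog_ansatz_matrices {F : Type*} [Field F] (t d e : F)
    (ht : t ≠ 0) (hd : d ≠ 0) (he : e ≠ 0) :
    (∀ i j, t * matMulF (DstarM d) (EstarM t d e) i j = DstarM (F := F) d i j + EstarM t d e i j) ∧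
    (∀ i j, d * matMulF (DstarM d) (AstarM (F := F)) i j = AstarM (F := F) i j) ∧
    (∀ i j, e * matMulF (AstarM (F := F)) (EstarM t d e) i j = AstarM (F := F) i j) := by
  refine ⟨fun i j => ?_, fun i j => ?_, fun i j => ?_⟩
  · rw [matMulF_DstarM, mul_div_assoc', mul_EstarM_succ ht, DstarM]
    split_ifs <;> field_simp <;> ring
  · rw [matMulF_DstarM, mul_div_cancel₀ _ hd, AstarM, AstarM]
  · rw [matMulF_AstarM, EstarM_zero_left, AstarM]
    split_ifs <;> simp [he]
end

section
/- Let M be a multiline queue with a 1-ball at its leftmost bottom row position, with bottom row balls at positions x_1 < ⋯ < x_{r+ℓ} (balls of both kinds) and with 0-balls (occupied balls) forming the set H determined by the ball-drop algorithm. Then for every interval between two consecutive 1-balls at positions a < b, the number of top row balls in (a, j] is at least the number of 0-balls in (a, j] for every a < j ≤ b, with equality at j = b. Consequently, the pair of lattice paths (P_1, P_2) obtained from the bottom and top rows of M (south edge for bottom vacancy, west edge for 0-ball, southwest edge for 1-ball in P_1; southwest for a top vacancy above a 1-ball, west for a top ball, south otherwise in P_2) satisfies: P_2 lies weakly above P_1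 and the two paths coincide at every diagonal edge. -/
/-- Positions are `1, …, n`. A bottom row ball (position of a 0 or 1 of `X`) at position
`p` is occupied (a 0-ball) under the ball-drop algorithm iff there is some `q < p` such that
`(q, p]` contains at least as many top row balls (elements of `T`) as bottom row balls. -/
def occupiedPos (X : ℕ → Fin 3) (T : Finset ℕ) (p : ℕ) : Prop :=
  ∃ q < p, ((Finset.Ioc q p).filter (fun s => X s ≠ 2)).card
      ≤ (T.filter (fun s => q < s ∧ s ≤ p)).card

/-- `T` (the set of top row ball positions) is a multiline queue of type `X`. -/
def MLQtype (n : ℕ) (X : ℕ → Fin 3) (T : Finset ℕ) : Prop :=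
  T ⊆ Finset.Icc 1 n ∧
  T.card = ((Finset.Icc 1 n).filter (fun p => X p = 0)).card ∧
  ∀ p ∈ Finset.Icc 1 n, (X p = 0 ↔ (X p ≠ 2 ∧ occupiedPos X T p))

/-!
Write `B(q, p)` and `T(q, p)` for the numbers of bottom row balls and of top row balls in
`(q, p]`. A bottom ball at `p` is occupied iff `B(q, p) ≤ T(q, p)` for some `q < p`. Between
the consecutive 1-balls `a < b` every ball is a 0-ball, hence occupied; by strong induction on
`j`, splitting `(a, j]` at the witness `q` of the ball at `j` (or, if `q < a`, using that `a` is
unoccupied), one gets `B(a, j) ≤ T(a, j)` for `a ≤ j < b`. Since `b` is unoccupied,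
`T(a, b) < B(a, b) = B(a, b - 1) + 1 ≤ T(a, b) + 1`, so `T(a, b) = B(a, b - 1)`, which is the
number of 0-balls in `(a, b]`.
-/

def countIoc (P : ℕ → Prop) [DecidablePred P] (q p : ℕ) : ℕ :=
  ((Finset.Ioc q p).filter P).card

section countIoc

variable {P Q : ℕ → Prop} [DecidablePred P] [DecidablePred Q]

@[simp]
theorem countIoc_self (p : ℕ) : countIoc P p p = 0 := by
  simp [countIoc]

theorem countIoc_add {q r p : ℕ} (hqr : q ≤ r) (hrp : r ≤ p) :
    countIoc P q r + countIoc P r p = countIoc P q p := by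
  rw [countIoc, countIoc, countIoc, ← Finset.Ioc_union_Ioc_eq_Ioc hqr hrp,
    Finset.filter_union, Finset.card_union_of_disjoint]
  exact Finset.disjoint_filter_filter (Finset.Ioc_disjoint_Ioc_of_le le_rfl)

theorem countIoc_mono_right {q r p : ℕ} (hqr : q ≤ r) (hrp : r ≤ p) :
    countIoc P q r ≤ countIoc P q p := by
  rw [← countIoc_add hqr hrp]
  exact Nat.le_add_right _ _

theorem countIoc_succ_of_pos {q p : ℕ} (h : q ≤ p) (hP : P (p + 1)) :
    countIoc P q (p + 1) = countIoc P q p + 1 := by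
  rw [← countIoc_add h (Nat.le_add_right p 1), countIoc, countIoc, Nat.Ioc_succ_singleton,
    Finset.filter_singleton, if_pos hP, Finset.card_singleton]

theorem countIoc_succ_of_neg {q p : ℕ} (h : q ≤ p) (hP : ¬ P (p + 1)) :
    countIoc P q (p + 1) = countIoc P q p := by
  rw [← countIoc_add h (Nat.le_add_right p 1), countIoc, countIoc, Nat.Ioc_succ_singleton,
    Finset.filter_singleton, if_neg hP, Finset.card_empty, add_zero]

theorem countIoc_congr {q p : ℕ} (h : ∀ s, q < s → s ≤ p → (P s ↔ Q s)) :
    countIoc P q p = countIoc Q q p := by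
  unfold countIoc
  congr 1
  exact Finset.filter_congr fun s hs => h s (Finset.mem_Ioc.1 hs).1 (Finset.mem_Ioc.1 hs).2

theorem card_filter_Ioc_eq_countIoc (T : Finset ℕ) (q p : ℕ) :
    (T.filter (fun s => q < s ∧ s ≤ p)).card = countIoc (· ∈ T) q p := by
  unfold countIoc
  congr 1
  ext s
  simp only [Finset.mem_filter, Finset.mem_Ioc]
  tauto

theorem countIoc_le_countIoc_of_forall_exists {a j : ℕ}
    (ha : ∀ q < a, countIoc Q q a ≤ countIoc P q a)
    (hcover : ∀ p, a < p → p ≤ j → P p → ∃ q < p, countIoc P q p ≤ countIoc Q q p)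
    (haj : a ≤ j) :
    countIoc P a j ≤ countIoc Q a j := by
  induction j using Nat.strong_induction_on with
  | _ j ih =>
    rcases haj.eq_or_lt with rfl | haj
    · simp
    obtain ⟨k, rfl⟩ : ∃ k, j = k + 1 := Nat.exists_eq_add_one.2 (by omega)
    have hak : a ≤ k := Nat.le_of_lt_succ haj
    by_cases hP : P (k + 1)
    · obtain ⟨q, hqk, hq⟩ := hcover (k + 1) haj le_rfl hP
      rcases lt_or_ge q a with hqa | haq
      · have hP_split := countIoc_add (P := P) hqa.le haj.le
        have hQ_split := countIoc_add (P := Q) hqa.le haj.le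
        have := ha q hqa
        omega
      · have hP_split := countIoc_add (P := P) haq hqk.le
        have hQ_split := countIoc_add (P := Q) haq hqk.le
        have := ih q hqk (fun p hap hpq => hcover p hap (by omega)) haq
        omega
    · calc countIoc P a (k + 1) = countIoc P a k := countIoc_succ_of_neg hak hP
        _ ≤ countIoc Q a k := ih k (by omega) (fun p hap hpk => hcover p hap (by omega)) hak
        _ ≤ countIoc Q a (k + 1) := countIoc_mono_right hak k.le_succ

end countIoc

theorem fin_three_eq_zero_iff_ne_two {v : Fin 3} (h : v ≠ 1) : v = 0 ↔ v ≠ 2 := by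
  revert v
  decide

section MLQ

variable {n : ℕ} {X : ℕ → Fin 3} {T : Finset ℕ} {p : ℕ}

theorem occupiedPos_iff :
    occupiedPos X T p ↔ ∃ q < p, countIoc (X · ≠ 2) q p ≤ countIoc (· ∈ T) q p := by
  simp only [occupiedPos, card_filter_Ioc_eq_countIoc]
  rfl

theorem MLQtype.occupiedPos_of_eq_zero (hM : MLQtype n X T) (hp : p ∈ Finset.Icc 1 n)
    (h0 : X p = 0) : occupiedPos X T p :=
  ((hM.2.2 p hp).1 h0).2

theorem MLQtype.not_occupiedPos_of_eq_one (hM : MLQtype n X T) (hp : p ∈ Finset.Icc 1 n)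
    (h1 : X p = 1) : ¬ occupiedPos X T p := fun hocc => by
  have := (hM.2.2 p hp).2 ⟨by simp [h1], hocc⟩
  simp [h1] at this

theorem MLQtype.countIoc_lt_of_eq_one (hM : MLQtype n X T) (hp : p ∈ Finset.Icc 1 n)
    (h1 : X p = 1) {q : ℕ} (hq : q < p) :
    countIoc (· ∈ T) q p < countIoc (X · ≠ 2) q p := by
  by_contra! h
  exact hM.not_occupiedPos_of_eq_one hp h1 (occupiedPos_iff.2 ⟨q, hq, h⟩)

theorem MLQtype.countIoc_le_of_forall_ne_one (hM : MLQtype n X T) {a j : ℕ}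
    (ha : a ∈ Finset.Icc 1 n) (hXa : X a = 1) (hjn : j ≤ n) (haj : a ≤ j)
    (hne : ∀ s, a < s → s ≤ j → X s ≠ 1) :
    countIoc (X · ≠ 2) a j ≤ countIoc (· ∈ T) a j := by
  refine countIoc_le_countIoc_of_forall_exists
    (fun q hq => (hM.countIoc_lt_of_eq_one ha hXa hq).le) (fun p hap hpj hp => ?_) haj
  have hp0 : X p = 0 := (fin_three_eq_zero_iff_ne_two (hne p hap hpj)).2 hp
  have hpn : p ∈ Finset.Icc 1 n := by
    simp only [Finset.mem_Icc] at ha ⊢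
    omega
  exact occupiedPos_iff.1 (hM.occupiedPos_of_eq_zero hpn hp0)

end MLQ

theorem mlq_interval_counts_general (n : ℕ) (X : ℕ → Fin 3) (T : Finset ℕ)
    (hM : MLQtype n X T)
    (a b : ℕ) (ha : a ∈ Finset.Icc 1 n) (hb : b ∈ Finset.Icc 1 n) (hab : a < b)
    (hXa : X a = 1) (hXb : X b = 1)
    (hbetween : ∀ j, a < j → j < b → X j ≠ 1) :
    (∀ j, a < j → j ≤ b →
      ((Finset.Ioc a j).filter (fun s => X s = 0)).card
        ≤ (T.filter (fun s => a < s ∧ s ≤ j)).card) ∧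
    ((Finset.Ioc a b).filter (fun s => X s = 0)).card
      = (T.filter (fun s => a < s ∧ s ≤ b)).card := by
  simp only [card_filter_Ioc_eq_countIoc]
  obtain ⟨c, rfl⟩ : ∃ c, b = c + 1 := Nat.exists_eq_add_one.2 (by omega)
  have hac : a ≤ c := Nat.le_of_lt_succ hab
  have hzero : ∀ j ≤ c, countIoc (X · = 0) a j = countIoc (X · ≠ 2) a j := fun j hj =>
    countIoc_congr fun s has hsj => fin_three_eq_zero_iff_ne_two (hbetween s has (by omega))
  have hballs : ∀ j, a ≤ j → j ≤ c → countIoc (X · ≠ 2) a j ≤ countIoc (· ∈ T) a j :=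
    fun j haj hjc => hM.countIoc_le_of_forall_ne_one ha hXa
      (by simp only [Finset.mem_Icc] at hb; omega) haj fun s has hsj => hbetween s has (by omega)
  have hb_unoccupied := hM.countIoc_lt_of_eq_one hb hXb hab
  have hcount_b : countIoc (X · = 0) a (c + 1) = countIoc (· ∈ T) a (c + 1) := by
    have hB_succ := countIoc_succ_of_pos (P := (X · ≠ 2)) hac (by simp [hXb])
    have hZ_succ := countIoc_succ_of_neg (P := (X · = 0)) hac (by simp [hXb])
    have hT_mono := countIoc_mono_right (P := (· ∈ T)) hac (Nat.le_add_right c 1)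
    have := hballs c hac le_rfl
    have := hzero c le_rfl
    omega
  refine ⟨fun j haj hjb => ?_, hcount_b⟩
  rcases hjb.eq_or_lt with rfl | hjc
  · exact hcount_b.le
  · exact (hzero j (by omega)).trans_le (hballs j haj.le (by omega))

/-- Let `M` be a multiline queue with a 1-ball at its leftmost bottom row position
(`X 1 = 1`). For any two consecutive 1-balls at positions `a < b` (no 1 strictly between),
the number of top row balls in `(a, j]` is at least the number of 0-balls in `(a, j]` for
every `a < j ≤ b`, with equality at `j = b`. (Consequently the pair of lattice paths read
off the bottom and top rows of `M` is nested: `P₂` lies weakly above `P₁` and the two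
paths coincide at every diagonal edge.) -/
theorem mlq_interval_counts (n : ℕ) (X : ℕ → Fin 3) (T : Finset ℕ)
    (h1 : X 1 = 1) (hM : MLQtype n X T)
    (a b : ℕ) (ha : a ∈ Finset.Icc 1 n) (hb : b ∈ Finset.Icc 1 n) (hab : a < b)
    (hXa : X a = 1) (hXb : X b = 1)
    (hbetween : ∀ j, a < j → j < b → X j ≠ 1) :
    (∀ j, a < j → j ≤ b →
      ((Finset.Ioc a j).filter (fun s => X s = 0)).card
        ≤ (T.filter (fun s => a < s ∧ s ≤ j)).card) ∧
    ((Finset.Ioc a b).filter (fun s => X s = 0)).card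
      = (T.filter (fun s => a < s ∧ s ≤ b)).card :=
  mlq_interval_counts_general n X T hM a b ha hb hab hXa hXb hbetween
end

section
/- For a partition λ = (λ_1 ≥ λ_2 ≥ ⋯ ≥ λ_j ≥ 0), define the j × j matrix A_λ with entries (A_λ)_{i,j'} = binom(λ_{j'} + 1, j' − i + 1). Then det(A_λ) equals the number of monotone lattice paths (with north and east unit steps) from (0,0) to the endpoint of the staircase boundary of λ that lie weakly above the southeast boundary of the Young diagram of λ. Equivalently, det(A_λ) counts lattice paths weakly dominating the path P(X) where X ∈ {0,2}^{j+m} is the word whose 2s are at positions a_i = m + i − λ_i. -/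
/-!
Both sides count the partitions `μ ⊆ λ`, i.e. the antitone `μ` with `μ ≤ λ` pointwise.

The path with south steps at `m + 1 + i - μ_i` weakly dominates `P(λ)` exactly when `μ ⊆ λ`,
and every dominating path is of this form.

For the determinant, write `λ_0 = ⋯ = λ_a = L + 1 > λ_{a+1}`. A partition `μ ⊆ λ` either has
`μ_a ≤ L`, i.e. `μ ⊆ λ - e_a`, or equals `L + 1` on its first `a + 1` entries, followed by an
arbitrary partition inside the tail `(λ_{a+1}, …)`. The determinant obeys the same recursion:
Pascal's rule splits column `a`, and in the second summand column operations (Pascal's rule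
again) make the first `a + 1` columns unitriangular, leaving the determinant of the tail.
-/

open Finset Matrix Function

namespace Matrix

theorem det_of_cols_add_next {R : Type*} [CommRing R] {J : ℕ} (v : ℕ → Fin J → R)
    (M : Matrix (Fin J) (Fin J) R) {k : ℕ} (hk : k < J) :
    det (of fun (i s : Fin J) =>
      if (s : ℕ) ≤ k then v s i + (if (s : ℕ) < k then v (s + 1) i else 0) else M i s) =
      det (of fun (i s : Fin J) => if (s : ℕ) ≤ k then v s i else M i s) := by
  suffices ∀ t ≤ k, det (of fun (i s : Fin J) => if (s : ℕ) ≤ k then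
      v s i + (if (s : ℕ) < t then v (s + 1) i else 0) else M i s) =
      det (of fun (i s : Fin J) => if (s : ℕ) ≤ k then v s i else M i s) from this k le_rfl
  intro t ht
  induction t with
  | zero => simp
  | succ t ih =>
    rw [← ih (by omega)]
    let s₀ : Fin J := ⟨t, by omega⟩
    let s₁ : Fin J := ⟨t + 1, by omega⟩
    refine Eq.trans ?_ (det_updateCol_add_smul_self _ (i := s₀) (j := s₁)
      (by simp [s₀, s₁, Fin.ext_iff]) 1)
    congr 1
    ext i s
    rcases eq_or_ne s s₀ with rfl | hs
    · simp [s₀, s₁, show t ≤ k by omega, show ¬ k ≤ t by omega]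
    · have : (s : ℕ) ≠ t := fun h => hs (Fin.ext h)
      simp only [updateCol_ne hs, of_apply]
      split_ifs <;> first | rfl | omega

theorem det_eq_det_submatrix_natAdd {R : Type*} [CommRing R] {a b : ℕ}
    (M : Matrix (Fin (a + b)) (Fin (a + b)) R)
    (hupper : ∀ i s : Fin a, s < i → M (Fin.castAdd b i) (Fin.castAdd b s) = 0)
    (hdiag : ∀ i : Fin a, M (Fin.castAdd b i) (Fin.castAdd b i) = 1)
    (hlower : ∀ (r : Fin b) (s : Fin a), M (Fin.natAdd a r) (Fin.castAdd b s) = 0) :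
    det M = det (M.submatrix (Fin.natAdd a) (Fin.natAdd a)) := by
  rw [← det_submatrix_equiv_self finSumFinEquiv M, ← fromBlocks_toBlocks (M.submatrix _ _)]
  have h₂₁ : (M.submatrix finSumFinEquiv finSumFinEquiv).toBlocks₂₁ = 0 := by
    ext r s
    simp [toBlocks₂₁, hlower]
  have h₁₁ : (M.submatrix finSumFinEquiv finSumFinEquiv).toBlocks₁₁.det = 1 := by
    rw [det_of_isUpperTriangular (fun i s h => by simp [toBlocks₁₁, hupper i s h])]
    simp [toBlocks₁₁, hdiag]
  rw [h₂₁, det_fromBlocks_zero₂₁, h₁₁, one_mul]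
  rfl

end Matrix

theorem Fin.antitone_append {α : Type*} [Preorder α] {m n : ℕ} {u : Fin m → α} {v : Fin n → α}
    (hu : Antitone u) (hv : Antitone v) (huv : ∀ i r, v r ≤ u i) : Antitone (Fin.append u v) := by
  intro x y hxy
  induction x using Fin.addCases <;> induction y using Fin.addCases <;>
    simp only [Fin.append_left, Fin.append_right]
  · exact hu ((Fin.strictMono_castAdd n).le_iff_le.mp hxy)
  · exact huv _ _
  · simp [Fin.le_def] at hxy; omega
  · exact hv ((Fin.strictMono_natAdd m).le_iff_le.mp hxy)

theorem Fin.add_sub_le_of_strictMono {n : ℕ} {f : Fin n → ℕ} (hf : StrictMono f) {i i' : Fin n}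
    (h : i ≤ i') : f i + ((i' : ℕ) - i) ≤ f i' := by
  have := card_le_card_of_injOn f (s := Icc i i') (t := Icc (f i) (f i'))
    (fun x hx => by
      simp only [coe_Icc, Set.mem_Icc] at hx ⊢
      exact ⟨hf.monotone hx.1, hf.monotone hx.2⟩) hf.injective.injOn
  have h' : (i : ℕ) ≤ i' := h
  simp only [Fin.card_Icc, Nat.card_Icc] at this
  omega

theorem card_filter_image_univ {ι α : Type*} [Fintype ι] [DecidableEq α] {t : ι → α}
    (ht : Injective t) (P : α → Prop) [DecidablePred P] :
    #{x ∈ univ.image t | P x} = #{i | P (t i)} := by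
  rw [filter_image, card_image_of_injective _ ht]

theorem le_of_forall_card_filter_le {α : Type*} [LinearOrder α] {n : ℕ} {s t : Fin n → α}
    (hs : Monotone s) (ht : Monotone t)
    (h : ∀ i, #{k | t k ≤ t i} ≤ #{k | s k ≤ t i}) : s ≤ t := by
  intro i
  by_contra! hlt
  have h₁ : Iic i ⊆ ({k | t k ≤ t i} : Finset (Fin n)) := fun k hk =>
    mem_filter.mpr ⟨mem_univ k, ht (mem_Iic.mp hk)⟩
  have h₂ : ({k | s k ≤ t i} : Finset (Fin n)) ⊆ Iio i := fun k hk => by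
    rw [mem_Iio]
    by_contra! hik
    exact (hlt.trans_le (hs hik)).not_ge (mem_filter.mp hk).2
  have := (card_le_card h₁).trans ((h i).trans (card_le_card h₂))
  simp at this

/-- The `(i, t)` entry of the upper triangular Toeplitz matrix of `(1 + X) ^ n`. -/
def binomToeplitz (n i t : ℕ) : ℤ := if i ≤ t then (n.choose (t - i) : ℤ) else 0

theorem binomToeplitz_of_lt {n i t : ℕ} (h : t < i) : binomToeplitz n i t = 0 :=
  if_neg h.not_ge

@[simp]
theorem binomToeplitz_self (n i : ℕ) : binomToeplitz n i i = 1 := by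
  simp [binomToeplitz]

theorem binomToeplitz_add_add (n c i t : ℕ) :
    binomToeplitz n (c + i) (c + t) = binomToeplitz n i t := by
  simp [binomToeplitz, Nat.add_sub_add_left]

theorem binomToeplitz_succ_succ (n i t : ℕ) :
    binomToeplitz (n + 1) i (t + 1) = binomToeplitz n i (t + 1) + binomToeplitz n i t := by
  unfold binomToeplitz
  rcases lt_trichotomy i (t + 1) with h | rfl | h
  · rw [if_pos h.le, if_pos h.le, if_pos (Nat.lt_succ_iff.mp h),
      Nat.succ_sub (Nat.lt_succ_iff.mp h), Nat.choose_succ_succ, Nat.cast_add, add_comm]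
  · simp
  · simp [h.not_ge, (Nat.lt_of_succ_lt h).not_ge]

def pathMatrix {j : ℕ} (lam : Fin j → ℕ) : Matrix (Fin j) (Fin j) ℤ :=
  of fun i s => binomToeplitz (lam s + 1) i (s + 1)

theorem det_pathMatrix_zero (j : ℕ) : det (pathMatrix (0 : Fin j → ℕ)) = 1 := by
  rw [det_of_isLowerTriangular _ fun i s (h : i < s) => ?_]
  · simp [pathMatrix, binomToeplitz]
  · have : (i : ℕ) < s := h
    simp [pathMatrix, binomToeplitz, Nat.choose_eq_zero_of_lt (by omega : 1 < (s : ℕ) + 1 - i)]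

theorem det_pathMatrix_eq_add {a b L : ℕ} (lam : Fin (a + 1 + b) → ℕ)
    (hblock : ∀ i : Fin (a + 1 + b), (i : ℕ) ≤ a → lam i = L + 1) :
    det (pathMatrix lam) = det (pathMatrix (update lam ⟨a, by omega⟩ L)) +
      det (pathMatrix fun r : Fin b => lam (Fin.natAdd (a + 1) r)) := by
  set k : Fin (a + 1 + b) := ⟨a, by omega⟩
  set lam' := update lam k L
  let v : ℕ → Fin (a + 1 + b) → ℤ := fun s i => binomToeplitz (L + 1) i s
  have hcol : pathMatrix lam =
      updateCol (pathMatrix lam) k ((fun i => pathMatrix lam' i k) + v a) := by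
    ext i s
    rcases eq_or_ne s k with rfl | hs
    · simp [pathMatrix, lam', v, k, hblock, binomToeplitz_succ_succ]
    · rw [updateCol_ne hs]
  have hlam' : updateCol (pathMatrix lam) k (fun i => pathMatrix lam' i k) = pathMatrix lam' := by
    ext i s
    rcases eq_or_ne s k with rfl | hs
    · rw [updateCol_self]
    · simp [updateCol_ne hs, pathMatrix, lam', update_of_ne hs]
  have hsplit : updateCol (pathMatrix lam) k (v a) = of fun (i s : Fin (a + 1 + b)) =>
      if (s : ℕ) ≤ a then v s i + (if (s : ℕ) < a then v (s + 1) i else 0)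
      else pathMatrix lam i s := by
    ext i s
    rcases eq_or_ne s k with rfl | hs
    · simp [k]
    · have hsa : (s : ℕ) ≠ a := fun h => hs (Fin.ext h)
      simp only [updateCol_ne hs, of_apply]
      split_ifs with h₁ h₂
      · rw [pathMatrix, of_apply, hblock s h₁, binomToeplitz_succ_succ, add_comm]
      · omega
      · rfl
  have htail : det (of fun (i s : Fin (a + 1 + b)) =>
      if (s : ℕ) ≤ a then v s i else pathMatrix lam i s) =
      det (pathMatrix fun r : Fin b => lam (Fin.natAdd (a + 1) r)) := by
    rw [det_eq_det_submatrix_natAdd]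
    · congr 1
      ext r s
      simp [pathMatrix, add_assoc, binomToeplitz_add_add]
    · intro i s h
      simp [v, binomToeplitz_of_lt h, Nat.lt_succ_iff.mp s.isLt]
    · intro i
      simp [v, Nat.lt_succ_iff.mp i.isLt]
    · intro r s
      simp [v, Nat.lt_succ_iff.mp s.isLt, binomToeplitz_of_lt (by omega : (s : ℕ) < a + 1 + r)]
  rw [hcol, det_updateCol_add, hlam', hsplit, det_of_cols_add_next v _ (by omega), htail]

def subpartitions {j : ℕ} (lam : Fin j → ℕ) : Finset (Fin j → ℕ) :=
  {w ∈ Fintype.piFinset fun i => range (lam i + 1) | Antitone w}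

theorem mem_subpartitions {j : ℕ} {lam w : Fin j → ℕ} :
    w ∈ subpartitions lam ↔ w ≤ lam ∧ Antitone w := by
  simp [subpartitions, Pi.le_def]

theorem subpartitions_zero (j : ℕ) : subpartitions (0 : Fin j → ℕ) = {0} := by
  ext w
  simp only [mem_subpartitions, mem_singleton]
  refine ⟨fun h => le_antisymm h.1 fun _ => Nat.zero_le _, ?_⟩
  rintro rfl
  exact ⟨le_rfl, fun _ _ _ => le_rfl⟩

theorem subpartitions_update_eq_filter {j L : ℕ} (lam : Fin j → ℕ) (k : Fin j)
    (hk : lam k = L + 1) :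
    subpartitions (update lam k L) = {w ∈ subpartitions lam | ¬ w k = L + 1} := by
  ext w
  simp only [mem_filter, mem_subpartitions, le_update_iff]
  constructor
  · rintro ⟨⟨hwk, hle⟩, hw⟩
    refine ⟨⟨fun i => ?_, hw⟩, by omega⟩
    rcases eq_or_ne i k with rfl | hi
    · exact hk ▸ hwk.trans L.le_succ
    · exact hle i hi
  · rintro ⟨⟨hle, hw⟩, hwk⟩
    have : w k ≤ lam k := hle k
    exact ⟨⟨by omega, fun i _ => hle i⟩, hw⟩

theorem card_filter_subpartitions_eq_card_tail {a b L : ℕ} (lam : Fin (a + 1 + b) → ℕ)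
    (hblock : ∀ i : Fin (a + 1 + b), (i : ℕ) ≤ a → lam i = L + 1)
    (htail : ∀ i : Fin (a + 1 + b), a < i → lam i ≤ L) :
    #{w ∈ subpartitions lam | w ⟨a, by omega⟩ = L + 1} =
      #(subpartitions fun r : Fin b => lam (Fin.natAdd (a + 1) r)) := by
  have hcast : ∀ i : Fin (a + 1), lam (Fin.castAdd b i) = L + 1 :=
    fun i => hblock _ (Nat.le_of_lt_succ i.isLt)
  have hnatAdd : Monotone (Fin.natAdd (a + 1) : Fin b → Fin (a + 1 + b)) :=
    (Fin.strictMono_natAdd _).monotone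
  refine card_nbij' (fun w r => w (Fin.natAdd (a + 1) r)) (Fin.append fun _ => L + 1)
    (fun w hw => ?_) (fun v hv => ?_) (fun w hw => ?_) (fun v _ => funext (Fin.append_right _ v))
  · simp only [mem_coe, mem_filter, mem_subpartitions] at hw ⊢
    exact ⟨fun r => hw.1.1 _, hw.1.2.comp_monotone hnatAdd⟩
  · simp only [mem_coe, mem_filter, mem_subpartitions] at hv ⊢
    refine ⟨⟨fun i => ?_, Fin.antitone_append antitone_const hv.2 fun _ r => ?_⟩,
      Fin.append_left _ _ (Fin.last a)⟩
    · induction i using Fin.addCases with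
      | left i => simp [hcast]
      | right r => simpa using hv.1 r
    · exact (hv.1 r).trans ((htail _ (by simp; omega)).trans L.le_succ)
  · simp only [mem_coe, mem_filter, mem_subpartitions] at hw
    obtain ⟨⟨hle, hw⟩, hwa⟩ := hw
    conv_rhs => rw [← Fin.append_castAdd_natAdd (f := w)]
    congr 1
    funext i
    have : w (Fin.castAdd b i) ≤ lam (Fin.castAdd b i) := hle _
    rw [hcast] at this
    exact le_antisymm (hwa ▸ hw (Fin.le_def.mpr (Nat.le_of_lt_succ i.isLt))) this

theorem card_subpartitions_eq_add {a b L : ℕ} (lam : Fin (a + 1 + b) → ℕ)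
    (hblock : ∀ i : Fin (a + 1 + b), (i : ℕ) ≤ a → lam i = L + 1)
    (htail : ∀ i : Fin (a + 1 + b), a < i → lam i ≤ L) :
    #(subpartitions lam) = #(subpartitions (update lam ⟨a, by omega⟩ L)) +
      #(subpartitions fun r : Fin b => lam (Fin.natAdd (a + 1) r)) := by
  rw [← card_filter_add_card_filter_not (fun w => w ⟨a, by omega⟩ = L + 1), add_comm,
    subpartitions_update_eq_filter lam _ (hblock _ le_rfl),
    card_filter_subpartitions_eq_card_tail lam hblock htail]

theorem Antitone.exists_top_block {j : ℕ} {lam : Fin j → ℕ} (hlam : Antitone lam)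
    (h0 : lam ≠ 0) :
    ∃ a b L, a + 1 + b = j ∧ (∀ i : Fin j, (i : ℕ) ≤ a → lam i = L + 1) ∧
      ∀ i : Fin j, a < i → lam i ≤ L := by
  obtain ⟨i₁, hi₁⟩ := Function.ne_iff.mp h0
  set i₀ : Fin j := ⟨0, i₁.pos⟩
  have hmax : ∀ i, lam i ≤ lam i₀ := fun i => hlam (Fin.le_def.mpr (Nat.zero_le _))
  have hi₀ : lam i₁ ≤ lam i₀ := hmax i₁
  have hS : ({i | lam i = lam i₀} : Finset (Fin j)).Nonempty := ⟨i₀, by simp⟩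
  set k := ({i | lam i = lam i₀} : Finset (Fin j)).max' hS
  have hk : lam k = lam i₀ := (mem_filter.mp (max'_mem _ hS)).2
  refine ⟨k, j - k - 1, lam i₀ - 1, by omega, fun i hi => ?_, fun i hi => ?_⟩
  · have : lam k ≤ lam i := hlam (Fin.le_def.mpr hi)
    have := hmax i
    simp only [Pi.zero_apply] at hi₁
    omega
  · have hne : lam i ≠ lam i₀ := fun h =>
      (Fin.lt_def.mpr hi).not_ge (le_max' _ i (by simp [h]))
    have := hmax i
    omega

theorem det_pathMatrix_eq_card_subpartitions {j : ℕ} {lam : Fin j → ℕ} (hlam : Antitone lam) :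
    det (pathMatrix lam) = #(subpartitions lam) := by
  induction hn : j + ∑ i, lam i using Nat.strong_induction_on generalizing j with
  | _ n ih =>
  rcases eq_or_ne lam 0 with rfl | h0
  · simp [det_pathMatrix_zero, subpartitions_zero]
  obtain ⟨a, b, L, rfl, hblock, htail⟩ := hlam.exists_top_block h0
  set k : Fin (a + 1 + b) := ⟨a, by omega⟩
  have hupdate : Antitone (update lam k L) := by
    intro x y hxy
    have hxy : (x : ℕ) ≤ y := hxy
    simp only [update_apply, Fin.ext_iff, k]
    split_ifs with hy hx hx
    · exact le_rfl
    · exact (hblock x (by omega)).ge.trans' L.le_succ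
    · exact htail y (by omega)
    · exact hlam (Fin.le_def.mpr hxy)
  have hsum : ∑ i, lam i = ∑ i, update lam k L i + 1 := by
    rw [sum_eq_add_sum_sdiff_singleton_of_mem (mem_univ k),
      sum_update_of_mem (mem_univ k), hblock k le_rfl]
    ring
  have hsum_tail : ∑ r : Fin b, lam (Fin.natAdd (a + 1) r) ≤ ∑ i, lam i := by
    rw [Fin.sum_univ_add]
    exact Nat.le_add_left _ _
  have htail_anti : Antitone fun r : Fin b => lam (Fin.natAdd (a + 1) r) :=
    hlam.comp_monotone (Fin.strictMono_natAdd _).monotone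
  rw [det_pathMatrix_eq_add lam hblock, card_subpartitions_eq_add lam hblock htail, Nat.cast_add,
    ih _ (by omega) hupdate rfl, ih _ (by omega) htail_anti rfl]

/-- The paper's `a_i = m + i - λ_i`, with `i` indexed from `0`. -/
def southSteps {j : ℕ} (m : ℕ) (w : Fin j → ℕ) : Finset ℕ :=
  univ.image fun i => m + 1 + i - w i

/-- A path with `N` steps, `j` of them south, is encoded by the set of positions of its south
steps; `T` weakly dominates `S` when every prefix of `T` has at most as many south steps as the
same prefix of `S`. -/
def dominatingPaths (N j : ℕ) (S : Finset ℕ) : Finset (Finset ℕ) :=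
  {T ∈ (Icc 1 N).powersetCard j |
    ∀ p ∈ Icc (1 : ℕ) N, #{x ∈ T | x ≤ p} ≤ #{x ∈ S | x ≤ p}}

theorem strictMono_southStep {j m : ℕ} {w : Fin j → ℕ} (hw : Antitone w)
    (hm : ∀ i, w i ≤ m) :
    StrictMono fun i : Fin j => m + 1 + i - w i := by
  intro x y hxy
  dsimp only
  have := hw hxy.le
  have := hm x
  have : (x : ℕ) < y := hxy
  omega

theorem southSteps_injOn (j m : ℕ) :
    Set.InjOn (southSteps (j := j) m) {w | Antitone w ∧ ∀ i, w i ≤ m} := by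
  intro w hw v hv h
  have hrange := congrArg (fun S : Finset ℕ => (S : Set ℕ)) h
  simp only [southSteps, coe_image, coe_univ, Set.image_univ] at hrange
  have := ((strictMono_southStep hw.1 hw.2).range_inj (strictMono_southStep hv.1 hv.2)).mp hrange
  funext i
  have := congrFun this i
  have := hw.2 i
  have := hv.2 i
  omega

theorem southSteps_mem_dominatingPaths {j m : ℕ} {lam w : Fin j → ℕ} (hlam : Antitone lam)
    (hm : ∀ i, lam i ≤ m) (hw : w ∈ subpartitions lam) :
    southSteps m w ∈ dominatingPaths (j + m) j (southSteps m lam) := by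
  obtain ⟨hle, hanti⟩ := mem_subpartitions.mp hw
  have hwm : ∀ i, w i ≤ m := fun i => (hle i).trans (hm i)
  have hw_inj := (strictMono_southStep hanti hwm).injective
  simp only [dominatingPaths, mem_filter, mem_powersetCard]
  refine ⟨⟨fun x hx => ?_, ?_⟩, fun p _ => ?_⟩
  · obtain ⟨i, -, rfl⟩ := mem_image.mp hx
    have := hwm i
    have := i.isLt
    simp only [mem_Icc]
    omega
  · rw [southSteps, card_image_of_injective _ hw_inj, card_fin]
  · rw [southSteps, southSteps, card_filter_image_univ hw_inj (· ≤ p),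
      card_filter_image_univ (strictMono_southStep hlam hm).injective (· ≤ p)]
    refine card_le_card fun i hi => ?_
    simp only [mem_filter, mem_univ, true_and] at hi ⊢
    have : w i ≤ lam i := hle i
    omega

theorem exists_southSteps_eq_of_mem_dominatingPaths {j m : ℕ} {lam : Fin j → ℕ}
    (hlam : Antitone lam) (hm : ∀ i, lam i ≤ m) {T : Finset ℕ}
    (hT : T ∈ dominatingPaths (j + m) j (southSteps m lam)) :
    ∃ w ∈ subpartitions lam, southSteps m w = T := by
  simp only [dominatingPaths, mem_filter, mem_powersetCard] at hT
  obtain ⟨⟨hsub, hcard⟩, hdom⟩ := hT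
  set t := T.orderEmbOfFin hcard
  have hT : univ.image t = T := image_orderEmbOfFin_univ T hcard
  have ht_mem : ∀ i, t i ∈ Icc 1 (j + m) := fun i => hsub (orderEmbOfFin_mem T hcard i)
  have ht_le : ∀ i : Fin j, t i ≤ m + 1 + i := fun i => by
    have hi := i.isLt
    have h₁ := Fin.add_sub_le_of_strictMono t.strictMono
      (show i ≤ ⟨j - 1, by omega⟩ from Fin.le_def.mpr (by simp only; omega))
    have h₂ := (mem_Icc.mp (ht_mem ⟨j - 1, by omega⟩)).2
    simp only at h₁
    omega
  have hlam_le_t : (fun i : Fin j => m + 1 + i - lam i) ≤ t := by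
    refine le_of_forall_card_filter_le (strictMono_southStep hlam hm).monotone t.monotone
      fun i => ?_
    have := hdom (t i) (ht_mem i)
    rwa [← hT, southSteps, card_filter_image_univ t.injective (· ≤ t i),
      card_filter_image_univ (strictMono_southStep hlam hm).injective (· ≤ t i)] at this
  refine ⟨fun i => m + 1 + i - t i,
    mem_subpartitions.mpr ⟨fun i => ?_, fun x y hxy => ?_⟩, ?_⟩
  · have : m + 1 + i - lam i ≤ t i := hlam_le_t i
    have := hm i
    dsimp only
    omega
  · have := Fin.add_sub_le_of_strictMono t.strictMono hxy
    have := ht_le y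
    have : (x : ℕ) ≤ y := hxy
    dsimp only
    omega
  · rw [← hT, southSteps]
    congr 1
    funext i
    have := ht_le i
    omega

theorem dominatingPaths_southSteps_eq_image {j m : ℕ} {lam : Fin j → ℕ} (hlam : Antitone lam)
    (hm : ∀ i, lam i ≤ m) :
    dominatingPaths (j + m) j (southSteps m lam) = (subpartitions lam).image (southSteps m) := by
  ext T
  rw [mem_image]
  constructor
  · exact exists_southSteps_eq_of_mem_dominatingPaths hlam hm
  · rintro ⟨w, hw, rfl⟩
    exact southSteps_mem_dominatingPaths hlam hm hw

theorem card_dominatingPaths_southSteps {j m : ℕ} {lam : Fin j → ℕ} (hlam : Antitone lam)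
    (hm : ∀ i, lam i ≤ m) :
    #(dominatingPaths (j + m) j (southSteps m lam)) = #(subpartitions lam) := by
  rw [dominatingPaths_southSteps_eq_image hlam hm]
  refine card_image_of_injOn ((southSteps_injOn j m).mono fun w hw => ?_)
  obtain ⟨hle, hw⟩ := mem_subpartitions.mp (mem_coe.mp hw)
  exact ⟨hw, fun i => (hle i).trans (hm i)⟩

/-- Lindström–Gessel–Viennot determinantal formula: for a partition
`λ = (λ_1 ≥ ⋯ ≥ λ_j)` with all parts `≤ m`, the determinant of the `j × j` matrix
`A_λ` with entries `(A_λ)_{i,j'} = binom(λ_{j'} + 1, j' − i + 1)` equals the number of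
monotone lattice paths weakly dominating the path `P(X)`, where `X ∈ {0,2}^{j+m}` is the
word whose 2's are at positions `a_i = m + i − λ_i` (1-indexed). Paths are encoded by the
set of positions of their south steps; a path `T` weakly dominates `P(X)` (whose south
steps are at the positions `a_i`) when every prefix of `T` has at most as many south steps
as the corresponding prefix of `P(X)`. -/
theorem det_counts_dominating_paths (j m : ℕ) (lam : Fin j → ℕ)
    (hanti : Antitone lam) (hm : ∀ i, lam i ≤ m) :
    Matrix.det (Matrix.of fun i i' : Fin j =>
        if (i : ℕ) ≤ (i' : ℕ) + 1 then (((lam i' + 1).choose ((i' : ℕ) + 1 - i)) : ℤ) else 0)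
      = ((((Finset.Icc 1 (j + m)).powersetCard j).filter (fun T =>
          ∀ p ∈ Finset.Icc 1 (j + m), (T.filter (· ≤ p)).card
            ≤ (((Finset.univ : Finset (Fin j)).image
                  (fun i : Fin j => m + 1 + (i : ℕ) - lam i)).filter (· ≤ p)).card)).card : ℤ) := by
  change det (pathMatrix lam) = (#(dominatingPaths (j + m) j (southSteps m lam)) : ℤ)
  rw [card_dominatingPaths_southSteps hanti hm, det_pathMatrix_eq_card_subpartitions hanti]
end
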